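/- Under assumption (H), given a principal eigen-triple (λ⋆, η⋆, h⋆), the following multiplicative ergodic bound holds for every n ≥ 1: ⦀λ⋆^{−n}Q^{(n)} − h⋆⊗η⋆⦀ ≤ 2ρ^n(ε⁺/ε⁻)², where (h⋆⊗η⋆)(x,A) := h⋆(x)η⋆(A) and ρ := 1 − ε⁻/ε⁺. -/

import Mathlib

open MeasureTheory ProbabilityTheory Filter
open scoped ENNReal

/-- The operator `Q(φ)(x) = G(x) ∫ φ(y) M(x,dy)` associated with the kernel
`Q(x,dy) := G(x) M(x,dy)`. -/
noncomputable def Qop {X : Type*} [MeasurableSpace X] (G : X → ℝ) (M : Kernel X X)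
    (φ : X → ℝ) (x : X) : ℝ :=
  G x * ∫ y, φ y ∂(M x)

/-- The `n`-fold iterate `Q^{(n)}` of the operator `Q`, `Q^{(0)} = Id`. -/
noncomputable def Qiter {X : Type*} [MeasurableSpace X] (G : X → ℝ) (M : Kernel X X) :
    ℕ → (X → ℝ) → X → ℝ
  | 0 => fun φ => φ
  | n + 1 => fun φ => Qop G M (Qiter G M n φ)

/-!
Under (H), `Q φ (x) = ∫ q(x, y) φ(y) ν(dy)`. The Doob transform `P ψ = Q (h⋆ ψ) / (λ⋆ h⋆)` is
a Markov operator whose kernel dominates `ε⁻/ε⁺` times the probability density `h⋆ / ν(h⋆)`,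
so by Doeblin's argument every application of `P` shrinks the oscillation of `ψ` by the factor
`ρ = 1 - ε⁻/ε⁺`; and `P` preserves `η⋆(h⋆ ψ)` because `η⋆ Q = λ⋆ η⋆`. Since
`λ⋆⁻ⁿ Q⁽ⁿ⁾ φ = h⋆ Pⁿ (φ / h⋆)`, where `φ / h⋆` has oscillation at most `2 ε⁺/ε⁻` and
`η⋆(h⋆ · φ / h⋆) = η⋆(φ)`, the bound follows with one more factor `h⋆ ≤ ε⁺/ε⁻`.
-/

open Set Function

lemma div_mem_Icc_of_abs_le_one {t u a : ℝ} (ht : |t| ≤ 1) (ha : 0 < a) (hau : a ≤ u) :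
    t / u ∈ Icc (-a⁻¹) (-a⁻¹ + 2 * a⁻¹) := by
  have hu : 0 < u := ha.trans_le hau
  have : |t / u| ≤ a⁻¹ := by
    rw [abs_div, abs_of_pos hu]
    exact div_le_of_le_mul₀ hu.le (inv_nonneg.2 ha.le)
      (ht.trans (by rw [← div_eq_inv_mul, one_le_div ha]; exact hau))
  constructor <;> linarith [abs_le.1 this]

section Averages

variable {X : Type*} [MeasurableSpace X] {μ : Measure X}

lemma integrable_mul_of_mem_Icc {w f : X → ℝ} {a b : ℝ} (hw : Integrable w μ)
    (hf : AEStronglyMeasurable f μ) (hfab : ∀ y, f y ∈ Icc a b) :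
    Integrable (fun y => w y * f y) μ :=
  hw.mul_bdd hf (ae_of_all _ fun y => abs_le_max_abs_abs (hfab y).1 (hfab y).2)

lemma integral_mul_mem_Icc {w f : X → ℝ} {a b : ℝ} (hw : Integrable w μ) (hw0 : 0 ≤ w)
    (hf : AEStronglyMeasurable f μ) (hfab : ∀ y, f y ∈ Icc a b) :
    ∫ y, w y * f y ∂μ ∈ Icc ((∫ y, w y ∂μ) * a) ((∫ y, w y ∂μ) * b) := by
  have hwf := integrable_mul_of_mem_Icc hw hf hfab
  rw [← integral_mul_const, ← integral_mul_const]
  exact ⟨integral_mono (hw.mul_const a) hwf fun y => mul_le_mul_of_nonneg_left (hfab y).1 (hw0 y),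
    integral_mono hwf (hw.mul_const b) fun y => mul_le_mul_of_nonneg_left (hfab y).2 (hw0 y)⟩

lemma integral_mul_sub_integral_mul_mem_Icc {k β f : X → ℝ} {α s c : ℝ}
    (hk : Integrable k μ) (hβ : Integrable β μ) (hβk : β ≤ k) (hk1 : ∫ y, k y ∂μ = 1)
    (hβα : ∫ y, β y ∂μ = α) (hf : AEStronglyMeasurable f μ) (hfs : ∀ y, f y ∈ Icc s (s + c)) :
    ∫ y, k y * f y ∂μ - ∫ y, β y * f y ∂μ ∈ Icc ((1 - α) * s) ((1 - α) * (s + c)) := by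
  have h := integral_mul_mem_Icc (hk.sub hβ) (sub_nonneg.2 hβk) hf hfs
  simp only [Pi.sub_apply, sub_mul] at h
  rwa [integral_sub hk hβ, hk1, hβα, integral_sub (integrable_mul_of_mem_Icc hk hf hfs)
    (integrable_mul_of_mem_Icc hβ hf hfs)] at h

end Averages

section DensityKernel

variable {X : Type*} [MeasurableSpace X] {G : X → ℝ} {M : Kernel X X} {ν η : Measure X}
  {q : X → X → ℝ} {lam εp : ℝ}

lemma integral_withDensity_ofReal {ρ : X → ℝ} (hρ : Measurable ρ) (hρ0 : 0 ≤ ρ) (f : X → ℝ) :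
    ∫ y, f y ∂ν.withDensity (fun y => ENNReal.ofReal (ρ y)) = ∫ y, ρ y * f y ∂ν := by
  rw [integral_withDensity_eq_integral_toReal_smul hρ.ennreal_ofReal
    (ae_of_all _ fun _ => ENNReal.ofReal_lt_top)]
  simp only [ENNReal.toReal_ofReal (hρ0 _), smul_eq_mul]

lemma Qop_eq_integral (hG : 0 ≤ G) (hq : Measurable (uncurry q)) (hq0 : ∀ x y, 0 ≤ q x y)
    (hH : ∀ x (A : Set X), MeasurableSet A →
      ENNReal.ofReal (G x) * M x A = ∫⁻ y in A, ENNReal.ofReal (q x y) ∂ν)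
    (f : X → ℝ) (x : X) :
    Qop G M f x = ∫ y, q x y * f y ∂ν := by
  have hQx : ENNReal.ofReal (G x) • M x = ν.withDensity (fun y => ENNReal.ofReal (q x y)) := by
    ext A hA
    rw [Measure.smul_apply, smul_eq_mul, hH x A hA, withDensity_apply _ hA]
  rw [Qop, ← integral_withDensity_ofReal (ρ := q x) (hq.comp measurable_prodMk_left) (hq0 x),
    ← hQx, integral_smul_measure, ENNReal.toReal_ofReal (hG x), smul_eq_mul]

lemma Qop_const_mul (c : ℝ) (f : X → ℝ) (x : X) :
    Qop G M (fun y => c * f y) x = c * Qop G M f x := by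
  rw [Qop, Qop, integral_const_mul, mul_left_comm]

lemma measurable_Qop [SFinite ν] (hQ : ∀ f x, Qop G M f x = ∫ y, q x y * f y ∂ν)
    (hq : Measurable (uncurry q)) {f : X → ℝ} (hf : Measurable f) : Measurable (Qop G M f) := by
  rw [show Qop G M f = fun x => ∫ y, q x y * f y ∂ν from funext (hQ f)]
  exact (hq.mul (hf.comp measurable_snd)).stronglyMeasurable.integral_prod_right'.measurable

/-- The left eigen-equation `η Q = λ η` in density form. -/
lemma withDensity_integral_density_eq_smul [IsFiniteMeasure η] [SFinite ν]
    (hq : Measurable (uncurry q)) (hq0 : ∀ x y, 0 ≤ q x y) (hq_ub : ∀ x y, q x y ≤ εp)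
    (hH : ∀ x (A : Set X), MeasurableSet A →
      ENNReal.ofReal (G x) * M x A = ∫⁻ y in A, ENNReal.ofReal (q x y) ∂ν)
    (hη : ∀ A : Set X, MeasurableSet A →
      ∫⁻ x, ENNReal.ofReal (G x) * M x A ∂η = ENNReal.ofReal lam * η A) :
    ν.withDensity (fun y => ENNReal.ofReal (∫ x, q x y ∂η)) = ENNReal.ofReal lam • η := by
  ext A hA
  rw [withDensity_apply _ hA]
  have hq_int : ∀ y, Integrable (fun x => q x y) η := fun y =>
    .of_mem_Icc 0 εp (hq.comp measurable_prodMk_right).aemeasurable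
      (ae_of_all _ fun x => ⟨hq0 x y, hq_ub x y⟩)
  calc ∫⁻ y in A, ENNReal.ofReal (∫ x, q x y ∂η) ∂ν
      = ∫⁻ y in A, ∫⁻ x, ENNReal.ofReal (q x y) ∂η ∂ν :=
        lintegral_congr fun y => ofReal_integral_eq_lintegral_ofReal (hq_int y)
          (ae_of_all _ fun x => hq0 x y)
    _ = ∫⁻ x, ∫⁻ y in A, ENNReal.ofReal (q x y) ∂ν ∂η :=
        (lintegral_lintegral_swap hq.ennreal_ofReal.aemeasurable).symm
    _ = ∫⁻ x, ENNReal.ofReal (G x) * M x A ∂η := lintegral_congr fun x => (hH x A hA).symm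
    _ = (ENNReal.ofReal lam • η) A := hη A hA

lemma integral_Qop_eq_mul_integral [IsFiniteMeasure η] [SFinite ν] (hG : 0 ≤ G)
    (hq : Measurable (uncurry q)) (hq0 : ∀ x y, 0 ≤ q x y) (hq_ub : ∀ x y, q x y ≤ εp)
    (hH : ∀ x (A : Set X), MeasurableSet A →
      ENNReal.ofReal (G x) * M x A = ∫⁻ y in A, ENNReal.ofReal (q x y) ∂ν)
    (hη : ∀ A : Set X, MeasurableSet A →
      ∫⁻ x, ENNReal.ofReal (G x) * M x A ∂η = ENNReal.ofReal lam * η A) (hlam : 0 ≤ lam)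
    {w : X → ℝ} (hw : Integrable w ν) :
    ∫ x, Qop G M w x ∂η = lam * ∫ y, w y ∂η := by
  have hqw : Integrable (uncurry fun x y => q x y * w y) (η.prod ν) :=
    (hw.comp_snd η).bdd_mul hq.aestronglyMeasurable
      (ae_of_all _ fun p => abs_le_max_abs_abs (hq0 p.1 p.2) (hq_ub p.1 p.2))
  calc ∫ x, Qop G M w x ∂η = ∫ x, ∫ y, q x y * w y ∂ν ∂η := by
        simp only [Qop_eq_integral hG hq hq0 hH]
    _ = ∫ y, (∫ x, q x y ∂η) * w y ∂ν := by
        rw [integral_integral_swap hqw]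
        simp only [integral_mul_const]
    _ = ∫ y, w y ∂(ENNReal.ofReal lam • η) := by
        rw [← withDensity_integral_density_eq_smul hq hq0 hq_ub hH hη,
          integral_withDensity_ofReal hq.stronglyMeasurable.integral_prod_left.measurable
            fun y => integral_nonneg fun x => hq0 x y]
    _ = lam * ∫ y, w y ∂η := by
        rw [integral_smul_measure, ENNReal.toReal_ofReal hlam, smul_eq_mul]

end DensityKernel

section DoobTransform

variable {X : Type*} [MeasurableSpace X] {G : X → ℝ} {M : Kernel X X} {ν η : Measure X}
  {q : X → X → ℝ} {h : X → ℝ} {lam εm εp : ℝ}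

noncomputable def doobTransform (G : X → ℝ) (M : Kernel X X) (h : X → ℝ) (lam : ℝ)
    (ψ : X → ℝ) (x : X) : ℝ :=
  Qop G M (fun y => h y * ψ y) x / (lam * h x)

lemma Qiter_mul_eq_doobTransform_iterate (hlam : lam ≠ 0) (hh : ∀ x, h x ≠ 0) (k : ℕ)
    (ψ : X → ℝ) (x : X) :
    Qiter G M k (fun y => h y * ψ y) x = lam ^ k * h x * (doobTransform G M h lam)^[k] ψ x := by
  induction k generalizing x with
  | zero => simp [Qiter]
  | succ k ih =>
    have hQk : Qiter G M k (fun y => h y * ψ y)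
        = fun y => lam ^ k * (h y * (doobTransform G M h lam)^[k] ψ y) :=
      funext fun y => by rw [ih, mul_assoc]
    show Qop G M (Qiter G M k _) x = _
    rw [hQk, Qop_const_mul, iterate_succ_apply', doobTransform]
    field_simp [hh x]
    ring

lemma measurable_doobTransform [SFinite ν] (hQ : ∀ f x, Qop G M f x = ∫ y, q x y * f y ∂ν)
    (hq : Measurable (uncurry q)) (hh : Measurable h) {ψ : X → ℝ} (hψ : Measurable ψ) :
    Measurable (doobTransform G M h lam ψ) :=
  (measurable_Qop hQ hq (hh.mul hψ)).div (measurable_const.mul hh)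

lemma doobTransform_eq_integral (hQ : ∀ f x, Qop G M f x = ∫ y, q x y * f y ∂ν)
    (ψ : X → ℝ) (x : X) :
    doobTransform G M h lam ψ x = ∫ y, q x y * h y / (lam * h x) * ψ y ∂ν := by
  rw [doobTransform, hQ, ← integral_div]
  congr 1 with y
  ring

lemma exists_doobTransform_mem_Icc [IsFiniteMeasure ν]
    (hQ : ∀ f x, Qop G M f x = ∫ y, q x y * f y ∂ν) (hq : Measurable (uncurry q))
    (hεm : 0 ≤ εm) (hq_lb : ∀ x y, εm ≤ q x y) (hq_ub : ∀ x y, q x y ≤ εp) (hlam : 0 < lam)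
    (hh_pos : ∀ x, 0 < h x) (hh_int : Integrable h ν) (heig : ∀ x, Qop G M h x = lam * h x)
    {ψ : X → ℝ} {s c : ℝ} (hψ : AEStronglyMeasurable ψ ν) (hψs : ∀ y, ψ y ∈ Icc s (s + c)) :
    ∃ s', ∀ x, doobTransform G M h lam ψ x ∈ Icc s' (s' + (1 - εm / εp) * c) := by
  set ch := ∫ y, h y ∂ν
  set β : X → ℝ := fun y => εm / (εp * ch) * h y
  refine ⟨∫ y, β y * ψ y ∂ν + (1 - εm / εp) * s, fun x => ?_⟩
  set k : X → ℝ := fun y => q x y * h y / (lam * h x)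
  have hq0 : ∀ y, 0 ≤ q x y := fun y => hεm.trans (hq_lb x y)
  have hqh_int : Integrable (fun y => q x y * h y) ν :=
    hh_int.bdd_mul (hq.comp measurable_prodMk_left).aestronglyMeasurable
      (ae_of_all _ fun y => abs_le_max_abs_abs (hq0 y) (hq_ub x y))
  have hk_int : Integrable k ν := hqh_int.div_const _
  have hk1 : ∫ y, k y ∂ν = 1 := by
    rw [integral_div, ← hQ, heig, div_self (mul_pos hlam (hh_pos x)).ne']
  have hch : lam * h x ≤ εp * ch := by
    rw [← heig, hQ, ← integral_const_mul]
    exact integral_mono hqh_int (hh_int.const_mul _)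
      fun y => mul_le_mul_of_nonneg_right (hq_ub x y) (hh_pos y).le
  have hβk : β ≤ k := fun y => by
    rw [show β y = εm * h y / (εp * ch) by ring]
    exact div_le_div₀ (mul_nonneg (hq0 y) (hh_pos y).le)
      (mul_le_mul_of_nonneg_right (hq_lb x y) (hh_pos y).le) (mul_pos hlam (hh_pos x)) hch
  have hβ : ∫ y, β y ∂ν = εm / εp := by
    have hch0 : ch ≠ 0 := right_ne_zero_of_mul ((mul_pos hlam (hh_pos x)).trans_le hch).ne'
    rw [integral_const_mul, div_mul_eq_mul_div, mul_div_mul_right _ _ hch0]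
  have hP := integral_mul_sub_integral_mul_mem_Icc hk_int (hh_int.const_mul _) hβk hk1 hβ hψ hψs
  rw [doobTransform_eq_integral hQ]
  constructor <;> linarith [hP.1, hP.2]

lemma doobTransform_iterate_mem_Icc [IsFiniteMeasure ν]
    (hQ : ∀ f x, Qop G M f x = ∫ y, q x y * f y ∂ν) (hq : Measurable (uncurry q))
    (hεm : 0 ≤ εm) (hq_lb : ∀ x y, εm ≤ q x y) (hq_ub : ∀ x y, q x y ≤ εp) (hlam : 0 < lam)
    (hh_pos : ∀ x, 0 < h x) (hh : Measurable h) (hh_int : Integrable h ν)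
    (heig : ∀ x, Qop G M h x = lam * h x)
    {ψ : X → ℝ} {s c : ℝ} (hψ : Measurable ψ) (hψs : ∀ y, ψ y ∈ Icc s (s + c)) (k : ℕ) :
    Measurable ((doobTransform G M h lam)^[k] ψ) ∧
      ∃ s', ∀ y, (doobTransform G M h lam)^[k] ψ y ∈ Icc s' (s' + (1 - εm / εp) ^ k * c) := by
  induction k with
  | zero => exact ⟨hψ, s, by simpa using hψs⟩
  | succ k ih =>
    obtain ⟨hψk, sk, hψks⟩ := ih
    rw [iterate_succ_apply', pow_succ', mul_assoc]
    exact ⟨measurable_doobTransform hQ hq hh hψk, exists_doobTransform_mem_Icc hQ hq hεm hq_lb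
      hq_ub hlam hh_pos hh_int heig hψk.aestronglyMeasurable hψks⟩

lemma integral_mul_doobTransform_iterate
    (hE : ∀ w, Integrable w ν → ∫ x, Qop G M w x ∂η = lam * ∫ y, w y ∂η) (hlam : lam ≠ 0)
    (hh : ∀ x, h x ≠ 0) {ψ : X → ℝ}
    (hint : ∀ k, Integrable (fun y => h y * (doobTransform G M h lam)^[k] ψ y) ν) (k : ℕ) :
    ∫ x, h x * (doobTransform G M h lam)^[k] ψ x ∂η = ∫ x, h x * ψ x ∂η := by
  induction k with
  | zero => rfl
  | succ k ih =>
    have hstep : ∀ x, h x * (doobTransform G M h lam)^[k + 1] ψ x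
        = Qop G M (fun y => h y * (doobTransform G M h lam)^[k] ψ y) x / lam := fun x => by
      rw [iterate_succ_apply', doobTransform]
      field_simp [hh x]
    simp only [hstep]
    rw [integral_div, hE _ (hint k), mul_div_cancel_left₀ _ hlam, ih]

lemma abs_doobTransform_iterate_sub_integral_le [IsFiniteMeasure ν] [IsFiniteMeasure η]
    (hQ : ∀ f x, Qop G M f x = ∫ y, q x y * f y ∂ν) (hq : Measurable (uncurry q))
    (hεm : 0 ≤ εm) (hq_lb : ∀ x y, εm ≤ q x y) (hq_ub : ∀ x y, q x y ≤ εp) (hlam : 0 < lam)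
    (hh_pos : ∀ x, 0 < h x) (hh : Measurable h) (hh_int : Integrable h ν)
    (hh_int' : Integrable h η) (heig : ∀ x, Qop G M h x = lam * h x)
    (hE : ∀ w, Integrable w ν → ∫ x, Qop G M w x ∂η = lam * ∫ y, w y ∂η)
    (hh_norm : ∫ x, h x ∂η = 1)
    {ψ : X → ℝ} {s c : ℝ} (hψ : Measurable ψ) (hψs : ∀ y, ψ y ∈ Icc s (s + c)) (n : ℕ) (x : X) :
    |(doobTransform G M h lam)^[n] ψ x - ∫ y, h y * ψ y ∂η| ≤ (1 - εm / εp) ^ n * c := by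
  have hiter := doobTransform_iterate_mem_Icc hQ hq hεm hq_lb hq_ub hlam hh_pos hh hh_int
    heig hψ hψs
  have hinv := integral_mul_doobTransform_iterate hE hlam.ne' (fun y => (hh_pos y).ne')
    (fun k => integrable_mul_of_mem_Icc hh_int (hiter k).1.aestronglyMeasurable
      (hiter k).2.choose_spec) n
  obtain ⟨hψn, s', hψns⟩ := hiter n
  have havg := integral_mul_mem_Icc hh_int' (fun y => (hh_pos y).le)
    hψn.aestronglyMeasurable hψns
  rw [hh_norm, one_mul, one_mul, hinv] at havg
  simpa [Real.dist_eq] using Real.dist_le_of_mem_Icc (hψns x) havg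

end DoobTransform

theorem stmt6_general {X : Type*} [MeasurableSpace X]
    (G : X → ℝ) (M : Kernel X X)
    (ν : Measure X) [IsProbabilityMeasure ν]
    (q : X → X → ℝ) (εm εp : ℝ)
    (hq_meas : Measurable fun p : X × X => q p.1 p.2)
    (hεm_pos : 0 < εm) (hεle : εm ≤ εp)
    (hq_lb : ∀ x y, εm ≤ q x y) (hq_ub : ∀ x y, q x y ≤ εp)
    (hG_pos : ∀ x, 0 < G x)
    (hH : ∀ x (A : Set X), MeasurableSet A →
      ENNReal.ofReal (G x) * M x A = ∫⁻ y in A, ENNReal.ofReal (q x y) ∂ν)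
    (lam : ℝ) (hlam_pos : 0 < lam)
    (ηs : Measure X) [IsProbabilityMeasure ηs]
    (hs : X → ℝ) (hhs_meas : Measurable hs)
    (hhs_lb : ∀ x, εm / εp ≤ hs x) (hhs_ub : ∀ x, hs x ≤ εp / εm)
    (h_meas_eq : ∀ A : Set X, MeasurableSet A →
      ∫⁻ x, ENNReal.ofReal (G x) * M x A ∂ηs = ENNReal.ofReal lam * ηs A)
    (h_fun_eq : ∀ x, Qop G M hs x = lam * hs x)
    (h_norm : ∫ x, hs x ∂ηs = 1)
    :
    ∀ n : ℕ, 1 ≤ n → ∀ φ : X → ℝ, Measurable φ → (∀ y, |φ y| ≤ 1) → ∀ x,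
      |(lam ^ n)⁻¹ * Qiter G M n φ x - hs x * ∫ y, φ y ∂ηs|
        ≤ 2 * (1 - εm / εp) ^ n * (εp / εm) ^ 2 := by
  intro n _ φ hφ hφ1 x
  have hεp : 0 < εp := hεm_pos.trans_le hεle
  have hhs_pos : ∀ y, 0 < hs y := fun y => (div_pos hεm_pos hεp).trans_le (hhs_lb y)
  have hq0 : ∀ x y, 0 ≤ q x y := fun x y => hεm_pos.le.trans (hq_lb x y)
  have hG : 0 ≤ G := fun x => (hG_pos x).le
  have hhs_int : ∀ (μ : Measure X) [IsFiniteMeasure μ], Integrable hs μ := fun μ _ =>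
    .of_mem_Icc 0 (εp / εm) hhs_meas.aemeasurable (ae_of_all _ fun y => ⟨(hhs_pos y).le, hhs_ub y⟩)
  have hψ : ∀ y, φ y / hs y ∈ Icc (-(εp / εm)) (-(εp / εm) + 2 * (εp / εm)) := fun y => by
    simpa only [inv_div] using div_mem_Icc_of_abs_le_one (hφ1 y) (div_pos hεm_pos hεp) (hhs_lb y)
  have hconv := abs_doobTransform_iterate_sub_integral_le (Qop_eq_integral hG hq_meas hq0 hH)
    hq_meas hεm_pos.le hq_lb hq_ub hlam_pos hhs_pos hhs_meas (hhs_int ν) (hhs_int ηs) h_fun_eq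
    (fun w hw => integral_Qop_eq_mul_integral hG hq_meas hq0 hq_ub hH h_meas_eq hlam_pos.le hw)
    h_norm (hφ.div hhs_meas) hψ n x
  have hφ_eq : φ = fun y => hs y * (φ y / hs y) :=
    funext fun y => (mul_div_cancel₀ _ (hhs_pos y).ne').symm
  rw [hφ_eq, Qiter_mul_eq_doobTransform_iterate hlam_pos.ne' (fun y => (hhs_pos y).ne'),
    mul_assoc, inv_mul_cancel_left₀ (pow_ne_zero n hlam_pos.ne'), ← mul_sub, abs_mul,
    abs_of_pos (hhs_pos x)]
  calc _ ≤ εp / εm * ((1 - εm / εp) ^ n * (2 * (εp / εm))) :=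
        mul_le_mul (hhs_ub x) hconv (abs_nonneg _) (div_pos hεp hεm_pos).le
    _ = 2 * (1 - εm / εp) ^ n * (εp / εm) ^ 2 := by ring

theorem stmt6 {X : Type*} [MeasurableSpace X]
    (G : X → ℝ) (M : Kernel X X) [IsMarkovKernel M]
    (ν : Measure X) [IsProbabilityMeasure ν]
    (q : X → X → ℝ) (εm εp : ℝ)
    (hq_meas : Measurable fun p : X × X => q p.1 p.2)
    (hεm_pos : 0 < εm) (hεle : εm ≤ εp)
    (hq_lb : ∀ x y, εm ≤ q x y) (hq_ub : ∀ x y, q x y ≤ εp)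
    (hG_meas : Measurable G) (hG_pos : ∀ x, 0 < G x) (hG_bdd : ∃ c, ∀ x, G x ≤ c)
    (hH : ∀ x (A : Set X), MeasurableSet A →
      ENNReal.ofReal (G x) * M x A = ∫⁻ y in A, ENNReal.ofReal (q x y) ∂ν)
    (lam : ℝ) (hlam_pos : 0 < lam)
    (ηs : Measure X) [IsProbabilityMeasure ηs]
    (hs : X → ℝ) (hhs_meas : Measurable hs)
    (hhs_lb : ∀ x, εm / εp ≤ hs x) (hhs_ub : ∀ x, hs x ≤ εp / εm)
    (h_meas_eq : ∀ A : Set X, MeasurableSet A →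
      ∫⁻ x, ENNReal.ofReal (G x) * M x A ∂ηs = ENNReal.ofReal lam * ηs A)
    (h_fun_eq : ∀ x, Qop G M hs x = lam * hs x)
    (h_norm : ∫ x, hs x ∂ηs = 1)
    :
    ∀ n : ℕ, 1 ≤ n → ∀ φ : X → ℝ, Measurable φ → (∀ y, |φ y| ≤ 1) → ∀ x,
      |(lam ^ n)⁻¹ * Qiter G M n φ x - hs x * ∫ y, φ y ∂ηs|
        ≤ 2 * (1 - εm / εp) ^ n * (εp / εm) ^ 2 :=
  stmt6_general G M ν q εm εp hq_meas hεm_pos hεle hq_lb hq_ub hG_pos hH lam hlam_pos ηs hs hhs_meas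
    hhs_lb hhs_ub h_meas_eq h_fun_eq h_norm
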